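/- arXiv:1803.08216 — 2 statements merged into one kernel-verified Lean document; each statement's English description precedes it below -/
import Mathlib

section
/- Let n ≥ 1 and r ≥ 2 be integers and let d₁, …, d_r be integers with 2 ≤ d₁ ≤ d₂ ≤ … ≤ d_r and 3 ≤ d_r. If n is even, then χ(d₁, …, d_r; n) > 0. If n is odd, then χ(d₁, …, d_r; n) < 0. -/
/-- `hcomplete k d` is the complete homogeneous symmetric polynomial
`h_k(d₁,…,d_r) = ∑_{i₁+⋯+i_r=k} d₁^{i₁}⋯d_r^{i_r}` evaluated at the tuple `d`. -/
def hcomplete {r : ℕ} (k : ℕ) (d : Fin r → ℤ) : ℤ :=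
  ∑ f ∈ Finset.Nat.antidiagonalTuple r k, ∏ j, d j ^ f j

/-- `chi d n = d₁⋯d_r · ∑_{i=0}^{n} (−1)^{n−i} · binom(n+r+1, i) · h_{n−i}(d₁,…,d_r)`,
which by a theorem of Azuma is the degree of the top Chern class of an `n`-dimensional
smooth complete intersection of hypersurfaces of degrees `d₁,…,d_r` in `ℙ^{n+r}`. -/
def chi {r : ℕ} (d : Fin r → ℤ) (n : ℕ) : ℤ :=
  (∏ j, d j) * ∑ i ∈ Finset.range (n + 1),
    (-1) ^ (n - i) * ((n + r + 1).choose i : ℤ) * hcomplete (n - i) d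

open Finset

lemma hc_zero {r : ℕ} (d : Fin r → ℤ) : hcomplete 0 d = 1 := by
  simp [hcomplete, Finset.Nat.antidiagonalTuple_zero_right]

lemma hc_nil (n : ℕ) (d : Fin 0 → ℤ) : hcomplete (n+1) d = 0 := by
  simp [hcomplete, Finset.Nat.antidiagonalTuple_zero_succ]

lemma hc_rec {r : ℕ} (k : ℕ) (d : Fin (r+1) → ℤ) :
    hcomplete k d = ∑ p ∈ Finset.HasAntidiagonal.antidiagonal k, d 0 ^ p.1 * hcomplete p.2 (Fin.tail d) := by
  rw [hcomplete]
  simp_rw [hcomplete, Finset.mul_sum]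
  rw [Finset.sum_sigma' (Finset.HasAntidiagonal.antidiagonal k)
    (fun p => Finset.Nat.antidiagonalTuple r p.2)
    (fun p g => d 0 ^ p.1 * ∏ j, Fin.tail d j ^ g j)]
  refine (Finset.sum_nbij' (fun x => Fin.cons x.1.1 x.2)
    (fun f => ⟨(f 0, ∑ j : Fin r, f j.succ), Fin.tail f⟩) ?_ ?_ ?_ ?_ ?_).symm
  · rintro ⟨⟨a, b⟩, g⟩ hx
    simp only [Finset.mem_sigma, Finset.mem_antidiagonal, Finset.HasAntidiagonal.mem_antidiagonal,
      Finset.Nat.mem_antidiagonalTuple] at hx ⊢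
    rw [Fin.sum_univ_succ]
    simp only [Fin.cons_zero, Fin.cons_succ, hx.2]
    omega
  · intro f hf
    simp only [Finset.Nat.mem_antidiagonalTuple, Fin.sum_univ_succ] at hf
    simp only [Finset.mem_sigma, Finset.mem_antidiagonal, Finset.HasAntidiagonal.mem_antidiagonal,
      Finset.Nat.mem_antidiagonalTuple]
    exact ⟨by simpa using hf, rfl⟩
  · rintro ⟨⟨a, b⟩, g⟩ hx
    simp only [Finset.mem_sigma, Finset.mem_antidiagonal, Finset.HasAntidiagonal.mem_antidiagonal,
      Finset.Nat.mem_antidiagonalTuple] at hx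
    simp only [Fin.cons_zero, Fin.cons_succ, Fin.tail_cons]
    congr 1
    simp [Prod.ext_iff, hx.2]
  · intro f hf
    simp [Fin.cons_self_tail]
  · rintro ⟨⟨a, b⟩, g⟩ hx
    rw [Fin.prod_univ_succ]
    simp [Fin.cons_zero, Fin.cons_succ, Fin.tail]

lemma hc_rec2 {r : ℕ} (k : ℕ) (d : Fin (r+1) → ℤ) :
    hcomplete (k+1) d = hcomplete (k+1) (Fin.tail d) + d 0 * hcomplete k d := by
  rw [hc_rec (k+1) d, hc_rec k d, Finset.Nat.antidiagonal_succ, Finset.sum_cons,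
    Finset.sum_map, Finset.mul_sum]
  simp only [pow_zero, one_mul, Function.Embedding.prodMap,
    Function.Embedding.coeFn_mk, Prod.map]
  congr 1
  apply Finset.sum_congr rfl
  intro p hp
  simp [pow_succ]
  ring
open Finset

lemma P0 (b t : ℕ) (ht : 1 ≤ t) (htb : t ≤ b) :
    ∑ i ∈ Finset.range (t+1), (-1:ℤ)^i * (b.choose i) * ((b-i).choose (t-i)) = 0 := by
  have hcong : ∀ i ∈ Finset.range (t+1), (-1:ℤ)^i * (b.choose i) * ((b-i).choose (t-i))
      = (b.choose t : ℤ) * ((-1)^i * (t.choose i)) := by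
    intro i hi
    rw [Finset.mem_range] at hi
    have h := Nat.choose_mul (n := b) (k := t) (by omega : i ≤ t)
    have h' : ((b.choose t : ℤ)) * (t.choose i) = (b.choose i : ℤ) * ((b-i).choose (t-i)) := by
      exact_mod_cast congrArg (Nat.cast (R := ℤ)) h
    linear_combination (-1:ℤ)^i * h'.symm
  rw [Finset.sum_congr rfl hcong, ← Finset.mul_sum,
    Int.alternating_sum_range_choose_of_ne (by omega : t ≠ 0), mul_zero]

lemma P1 (s : ℕ) : ∀ b, s ≤ b →
    ∑ i ∈ Finset.range (s+1), (-1:ℤ)^i * ((b+1).choose i) * ((b-i).choose (s-i)) = (-1)^s := by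
  induction s with
  | zero => intro b hb; simp
  | succ s ih =>
    intro b hb
    rw [Finset.sum_range_succ']
    have h0 : (-1:ℤ)^0 * ((b+1).choose 0) * ((b-0).choose (s+1-0)) = (b.choose (s+1) : ℤ) := by
      simp
    rw [h0]
    have e1 : ∀ i ∈ Finset.range (s+1),
        (-1:ℤ)^(i+1) * ((b+1).choose (i+1)) * ((b-(i+1)).choose (s+1-(i+1)))
        = -((-1)^i * (b.choose i) * (((b-1)-i).choose (s-i)))
          + ((-1)^(i+1) * (b.choose (i+1)) * ((b-(i+1)).choose (s+1-(i+1)))) := by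
      intro i hi
      rw [Finset.mem_range] at hi
      have hsub : b - (i+1) = (b-1) - i := by omega
      have hsub2 : s + 1 - (i+1) = s - i := by omega
      rw [Nat.choose_succ_succ b i, hsub, hsub2]
      push_cast
      ring
    rw [Finset.sum_congr rfl e1, Finset.sum_add_distrib, Finset.sum_neg_distrib]
    have hA : ∑ i ∈ Finset.range (s+1), (-1:ℤ)^i * (b.choose i) * (((b-1)-i).choose (s-i))
        = (-1)^s := by
      have := ih (b-1) (by omega)
      have hb1 : b - 1 + 1 = b := by omega
      rw [hb1] at this
      exact this
    have hB : ∑ i ∈ Finset.range (s+1),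
        (-1:ℤ)^(i+1) * (b.choose (i+1)) * ((b-(i+1)).choose (s+1-(i+1)))
        = - (b.choose (s+1) : ℤ) := by
      have h2 := P0 b (s+1) (by omega) (by omega)
      rw [Finset.sum_range_succ'] at h2
      simp only [pow_zero, Nat.choose_zero_right, Nat.cast_one, one_mul, Nat.sub_zero] at h2
      linarith [h2]
    rw [hA, hB]
    ring

lemma P2 (s : ℕ) : ∀ b, s ≤ b →
    ∑ i ∈ Finset.range (s+1), (-1:ℤ)^i * ((b+2).choose i) * ((b-i).choose (s-i))
      = (-1)^s * (s+1) := by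
  induction s with
  | zero => intro b hb; simp
  | succ s ih =>
    intro b hb
    rw [Finset.sum_range_succ']
    have h0 : (-1:ℤ)^0 * ((b+2).choose 0) * ((b-0).choose (s+1-0)) = (b.choose (s+1) : ℤ) := by
      simp
    rw [h0]
    have e1 : ∀ i ∈ Finset.range (s+1),
        (-1:ℤ)^(i+1) * ((b+2).choose (i+1)) * ((b-(i+1)).choose (s+1-(i+1)))
        = -((-1)^i * ((b+1).choose i) * (((b-1)-i).choose (s-i)))
          + ((-1)^(i+1) * ((b+1).choose (i+1)) * ((b-(i+1)).choose (s+1-(i+1)))) := by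
      intro i hi
      rw [Finset.mem_range] at hi
      have hsub : b - (i+1) = (b-1) - i := by omega
      have hsub2 : s + 1 - (i+1) = s - i := by omega
      rw [Nat.choose_succ_succ (b+1) i, hsub, hsub2]
      push_cast
      ring
    rw [Finset.sum_congr rfl e1, Finset.sum_add_distrib, Finset.sum_neg_distrib]
    have hA : ∑ i ∈ Finset.range (s+1), (-1:ℤ)^i * ((b+1).choose i) * (((b-1)-i).choose (s-i))
        = (-1)^s * (s+1) := by
      have := ih (b-1) (by omega)
      have hb1 : b - 1 + 2 = b + 1 := by omega
      rw [hb1] at this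
      exact this
    have hB : ∑ i ∈ Finset.range (s+1),
        (-1:ℤ)^(i+1) * ((b+1).choose (i+1)) * ((b-(i+1)).choose (s+1-(i+1)))
        = (-1)^(s+1) - (b.choose (s+1) : ℤ) := by
      have h2 := P1 (s+1) b hb
      rw [Finset.sum_range_succ'] at h2
      simp only [pow_zero, Nat.choose_zero_right, Nat.cast_one, one_mul, Nat.sub_zero] at h2
      linarith [h2]
    rw [hA, hB]
    push_cast
    ring
open Finset

lemma key_step (a : ℕ) (h : ℕ → ℤ) (n : ℕ) (h0 : h 0 = 1) :
    (∑ M ∈ Finset.range (n+1), (a.choose (n-M) : ℤ) * h (M+1))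
    + (∑ M ∈ Finset.range (n+1), (a.choose (n-M) : ℤ) * h M)
    + (a.choose (n+1) : ℤ)
    = (∑ M ∈ Finset.range (n+1), ((a+1).choose (n-M) : ℤ) * h (M+1)) + ((a+1).choose (n+1) : ℤ) := by
  rw [Finset.sum_range_succ (fun M => (a.choose (n-M) : ℤ) * h (M+1)) n,
    Finset.sum_range_succ (fun M => ((a+1).choose (n-M) : ℤ) * h (M+1)) n,
    Finset.sum_range_succ' (fun M => (a.choose (n-M) : ℤ) * h M) n]
  have hsplit : ∀ M ∈ Finset.range n, ((a+1).choose (n-M) : ℤ) * h (M+1)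
      = (a.choose (n-M) : ℤ) * h (M+1) + (a.choose (n-(M+1)) : ℤ) * h (M+1) := by
    intro M hM
    rw [Finset.mem_range] at hM
    have h1 : n - M = (n - (M+1)) + 1 := by omega
    rw [h1, Nat.choose_succ_succ]
    simp only [Nat.succ_eq_add_one]
    have h2 : n - (M+1) + 1 = n - M := by omega
    rw [h2]
    push_cast
    ring
  rw [Finset.sum_congr rfl hsplit, Finset.sum_add_distrib]
  have hp : ((a+1).choose (n+1) : ℤ) = (a.choose n : ℤ) + (a.choose (n+1) : ℤ) := by
    exact_mod_cast congrArg (Nat.cast (R := ℤ)) (Nat.choose_succ_succ a n)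
  rw [hp]
  simp only [Nat.sub_self, Nat.choose_zero_right, Nat.sub_zero, h0]
  push_cast
  ring

lemma L5 : ∀ (r n : ℕ) (d : Fin r → ℤ),
    hcomplete n d
      = ∑ M ∈ Finset.range (n+1), ((n + r - 1).choose (n - M) : ℤ)
          * hcomplete M (fun j => d j - 1) := by
  intro r
  induction r with
  | zero =>
    intro n d
    cases n with
    | zero => simp [hc_zero]
    | succ n =>
      rw [hc_nil]
      symm
      rw [Finset.sum_eq_single 0]
      · rw [hc_zero, mul_one]
        have h : (n + 1 + 0 - 1).choose (n + 1 - 0) = 0 := Nat.choose_eq_zero_of_lt (by omega)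
        rw [h]; simp
      · intro M hM hM0
        obtain ⟨M', rfl⟩ : ∃ M', M = M' + 1 := ⟨M - 1, by omega⟩
        rw [hc_nil]; ring
      · intro h; exact absurd (Finset.mem_range.mpr (by omega)) h
  | succ r ihr =>
    intro n
    induction n with
    | zero =>
      intro d
      rw [hc_zero, Finset.sum_range_one, hc_zero]
      simp
    | succ n ihn =>
      intro d
      set e : Fin (r+1) → ℤ := fun j => d j - 1 with he
      rw [hc_rec2 n d, ihr (n+1) (Fin.tail d), ihn d]
      have htail : (fun j : Fin r => Fin.tail d j - 1) = Fin.tail e := rfl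
      rw [htail]
      have c1 : n + 1 + r - 1 = n + r := by omega
      have c2 : n + (r + 1) - 1 = n + r := by omega
      have c3 : n + 1 + (r + 1) - 1 = n + r + 1 := by omega
      rw [c1, c2, c3]
      rw [← he]
      rw [Finset.sum_range_succ'
        (fun M => ((n+r).choose (n+1-M) : ℤ) * hcomplete M (Fin.tail e)) (n+1)]
      rw [Finset.sum_range_succ'
        (fun M => ((n+r+1).choose (n+1-M) : ℤ) * hcomplete M e) (n+1)]
      simp only [Nat.add_sub_add_right, Nat.sub_zero, hc_zero]
      have hrec : ∀ M ∈ Finset.range (n+1),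
          ((n+r).choose (n-M) : ℤ) * hcomplete (M+1) (Fin.tail e)
          = ((n+r).choose (n-M) : ℤ) * hcomplete (M+1) e
            - ((n+r).choose (n-M) : ℤ) * (e 0 * hcomplete M e) := by
        intro M hM
        linear_combination (-(((n+r).choose (n-M) : ℤ))) * hc_rec2 M e
      rw [Finset.sum_congr rfl hrec, Finset.sum_sub_distrib]
      have hE : ∑ M ∈ Finset.range (n+1),
          ((n+r).choose (n-M) : ℤ) * (e 0 * hcomplete M e)
          = e 0 * ∑ M ∈ Finset.range (n+1), ((n+r).choose (n-M) : ℤ) * hcomplete M e := by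
        rw [Finset.mul_sum]
        exact Finset.sum_congr rfl (fun M hM => by ring)
      have hd0 : d 0 = e 0 + 1 := by rw [he]; ring
      have key := key_step (n+r) (fun M => hcomplete M e) n (hc_zero e)
      linear_combination key - hE + (∑ M ∈ Finset.range (n+1),
        ((n+r).choose (n-M) : ℤ) * hcomplete M e) * hd0

lemma sum_triangle_swap (n : ℕ) (F : ℕ → ℕ → ℤ) :
    ∑ i ∈ Finset.range (n+1), ∑ M ∈ Finset.range (n-i+1), F i M
    = ∑ M ∈ Finset.range (n+1), ∑ i ∈ Finset.range (n-M+1), F i M := by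
  rw [Finset.sum_sigma' (Finset.range (n+1)) (fun i => Finset.range (n-i+1)) (fun i M => F i M),
    Finset.sum_sigma' (Finset.range (n+1)) (fun M => Finset.range (n-M+1)) (fun M i => F i M)]
  refine Finset.sum_nbij' (fun x => ⟨x.2, x.1⟩) (fun x => ⟨x.2, x.1⟩) ?_ ?_ ?_ ?_ ?_
  · rintro ⟨i, M⟩ hx
    simp only [Finset.mem_sigma, Finset.mem_range] at hx ⊢
    omega
  · rintro ⟨M, i⟩ hx
    simp only [Finset.mem_sigma, Finset.mem_range] at hx ⊢
    omega
  · rintro ⟨i, M⟩ _; rfl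
  · rintro ⟨M, i⟩ _; rfl
  · rintro ⟨i, M⟩ _; rfl

lemma MAIN (n r : ℕ) (hr : 1 ≤ r) (d : Fin r → ℤ) :
    ∑ i ∈ Finset.range (n+1), (-1:ℤ)^(n-i) * ((n+r+1).choose i : ℤ) * hcomplete (n-i) d
    = ∑ M ∈ Finset.range (n+1), (-1:ℤ)^M * ((n+1-M : ℕ) : ℤ)
        * hcomplete M (fun j => d j - 1) := by
  have step1 : ∑ i ∈ Finset.range (n+1),
      (-1:ℤ)^(n-i) * ((n+r+1).choose i : ℤ) * hcomplete (n-i) d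
      = ∑ i ∈ Finset.range (n+1), ∑ M ∈ Finset.range (n-i+1),
          (-1:ℤ)^(n-i) * ((n+r+1).choose i : ℤ) *
            (((n-i+r-1).choose (n-i-M) : ℤ) * hcomplete M (fun j => d j - 1)) := by
    refine Finset.sum_congr rfl (fun i hi => ?_)
    rw [L5 r (n-i) d, Finset.mul_sum]
  rw [step1, sum_triangle_swap]
  refine Finset.sum_congr rfl (fun M hM => ?_)
  rw [Finset.mem_range] at hM
  have hterm : ∀ i ∈ Finset.range (n-M+1),
      (-1:ℤ)^(n-i) * ((n+r+1).choose i : ℤ) *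
        (((n-i+r-1).choose (n-i-M) : ℤ) * hcomplete M (fun j => d j - 1))
      = ((-1)^n * hcomplete M (fun j => d j - 1)) *
          ((-1)^i * ((n+r-1+2).choose i : ℤ) * (((n+r-1)-i).choose ((n-M)-i) : ℤ)) := by
    intro i hi
    rw [Finset.mem_range] at hi
    have h1 : n + r + 1 = n + r - 1 + 2 := by omega
    have h2 : n - i + r - 1 = n + r - 1 - i := by omega
    have h3 : n - i - M = (n - M) - i := by omega
    have hsq : (-1:ℤ)^i * (-1)^i = 1 := by
      rw [← pow_add]
      exact Even.neg_one_pow ⟨i, rfl⟩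
    have hni : n - i + i = n := by omega
    have h4 : (-1:ℤ)^(n-i) = (-1)^n * (-1)^i :=
      calc (-1:ℤ)^(n-i) = (-1)^(n-i) * ((-1)^i * (-1)^i) := by rw [hsq, mul_one]
        _ = ((-1)^(n-i) * (-1)^i) * (-1)^i := by ring
        _ = (-1)^n * (-1)^i := by rw [← pow_add, hni]
    rw [h1, h2, h3, h4]
    ring
  rw [Finset.sum_congr rfl hterm, ← Finset.mul_sum,
    P2 (n-M) (n+r-1) (by omega)]
  have h5 : (-1:ℤ)^n * (-1)^(n-M) = (-1)^M := by
    have hnm : n + (n - M) = M + 2*(n-M) := by omega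
    rw [← pow_add, hnm, pow_add, pow_mul]
    simp
  have h6 : ((n+1-M : ℕ) : ℤ) = ((n-M : ℕ) : ℤ) + 1 := by
    have : n+1-M = (n-M)+1 := by omega
    rw [this]; push_cast; ring
  rw [h6]
  linear_combination (hcomplete M (fun j => d j - 1) * (((n-M:ℕ):ℤ)+1)) * h5

lemma hc_term_one_le {r : ℕ} (e : Fin r → ℤ) (he1 : ∀ j, 1 ≤ e j) (f : Fin r → ℕ) :
    1 ≤ ∏ j, e j ^ f j := by
  calc (1:ℤ) = ∏ _j : Fin r, 1 := by simp
    _ ≤ ∏ j, e j ^ f j :=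
      Finset.prod_le_prod (by intros; norm_num) (fun j _ => one_le_pow₀ (he1 j))

lemma hc_nonneg {r : ℕ} (e : Fin r → ℤ) (he1 : ∀ j, 1 ≤ e j) (k : ℕ) :
    0 ≤ hcomplete k e :=
  Finset.sum_nonneg (fun f _ => le_trans (by norm_num) (hc_term_one_le e he1 f))

lemma growth (r : ℕ) (hr : 2 ≤ r) (e : Fin r → ℤ) (he1 : ∀ j, 1 ≤ e j)
    (he2 : 2 ≤ e ⟨r-1, by omega⟩) (k : ℕ) :
    2 * hcomplete k e + 1 ≤ hcomplete (k+1) e := by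
  classical
  have hr0 : 0 < r := by omega
  set j0 : Fin r := ⟨r-1, by omega⟩ with hj0
  set i0 : Fin r := ⟨0, hr0⟩ with hi0
  have hne : i0 ≠ j0 := by
    simp only [hi0, hj0, Fin.mk.injEq, ne_eq]
    omega
  set φ : (Fin r → ℕ) → (Fin r → ℕ) := fun f => Function.update f j0 (f j0 + 1) with hφ
  set g0 : Fin r → ℕ := fun j => if j = i0 then k+1 else 0 with hg0
  have hg0mem : g0 ∈ Finset.Nat.antidiagonalTuple r (k+1) := by
    rw [Finset.Nat.mem_antidiagonalTuple]
    simp [hg0]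
  have hφmem : ∀ f ∈ Finset.Nat.antidiagonalTuple r k,
      φ f ∈ Finset.Nat.antidiagonalTuple r (k+1) := by
    intro f hf
    rw [Finset.Nat.mem_antidiagonalTuple] at hf ⊢
    rw [hφ]
    simp only
    rw [Finset.sum_update_of_mem (Finset.mem_univ j0), Finset.sdiff_singleton_eq_erase]
    rw [← Finset.add_sum_erase Finset.univ f (Finset.mem_univ j0)] at hf
    omega
  have hinj : Set.InjOn φ (Finset.Nat.antidiagonalTuple r k) := by
    intro f _ g _ h
    funext j
    by_cases hj : j = j0
    · rw [hj]
      have := congrFun h j0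
      simp only [hφ, Function.update_self] at this
      omega
    · have := congrFun h j
      simpa only [hφ, Function.update_of_ne hj] using this
  have hg0ni : g0 ∉ (Finset.Nat.antidiagonalTuple r k).image φ := by
    intro hmem
    rw [Finset.mem_image] at hmem
    obtain ⟨f, _, hf⟩ := hmem
    have := congrFun hf j0
    simp only [hφ, Function.update_self, hg0] at this
    rw [if_neg (by exact fun h => hne h.symm)] at this
    omega
  have hsubset : insert g0 ((Finset.Nat.antidiagonalTuple r k).image φ)
      ⊆ Finset.Nat.antidiagonalTuple r (k+1) := by
    intro x hx
    rw [Finset.mem_insert] at hx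
    rcases hx with rfl | hx
    · exact hg0mem
    · rw [Finset.mem_image] at hx
      obtain ⟨f, hf, rfl⟩ := hx
      exact hφmem f hf
  have hstep : ∑ f ∈ insert g0 ((Finset.Nat.antidiagonalTuple r k).image φ),
        ∏ j, e j ^ f j ≤ hcomplete (k+1) e := by
    rw [hcomplete]
    refine Finset.sum_le_sum_of_subset_of_nonneg hsubset (fun f _ _ => ?_)
    exact le_trans (by norm_num) (hc_term_one_le e he1 f)
  rw [Finset.sum_insert hg0ni] at hstep
  rw [Finset.sum_image (fun x hx y hy => hinj hx hy)] at hstep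
  have hφval : ∀ f : Fin r → ℕ, ∏ j, e j ^ (φ f) j = e j0 * ∏ j, e j ^ f j := by
    intro f
    rw [← Finset.mul_prod_erase Finset.univ (fun x => e x ^ (φ f) x) (Finset.mem_univ j0),
        ← Finset.mul_prod_erase Finset.univ (fun x => e x ^ f x) (Finset.mem_univ j0)]
    have h1 : (φ f) j0 = f j0 + 1 := Function.update_self _ _ _
    have h2 : ∀ x ∈ Finset.univ.erase j0, e x ^ (φ f) x = e x ^ f x := by
      intro x hx
      rw [Finset.mem_erase] at hx
      rw [hφ]
      simp only
      rw [Function.update_of_ne hx.1]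
    rw [Finset.prod_congr rfl h2, h1, pow_succ]
    ring
  have hsum : ∑ f ∈ Finset.Nat.antidiagonalTuple r k, ∏ j, e j ^ (φ f) j
      = e j0 * hcomplete k e := by
    rw [hcomplete, Finset.mul_sum]
    exact Finset.sum_congr rfl (fun f _ => hφval f)
  rw [hsum] at hstep
  have hg0val : 1 ≤ ∏ j, e j ^ g0 j := hc_term_one_le e he1 g0
  have hk := hc_nonneg e he1 k
  nlinarith [hstep, hg0val, hk, he2]

lemma T_eq (H : ℕ → ℤ) (n : ℕ) :
    ∑ m ∈ Finset.range (n+1), ∑ M ∈ Finset.range (m+1), (-1:ℤ)^M * H M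
    = ∑ M ∈ Finset.range (n+1), (-1)^M * ((n+1-M : ℕ) : ℤ) * H M := by
  induction n with
  | zero => simp
  | succ n ih =>
    rw [Finset.sum_range_succ
      (fun m => ∑ M ∈ Finset.range (m+1), (-1:ℤ)^M * H M) (n+1), ih]
    rw [Finset.sum_range_succ (fun M => (-1:ℤ)^M * ((n+1+1-M:ℕ):ℤ) * H M) (n+1),
        Finset.sum_range_succ (fun M => (-1:ℤ)^M * H M) (n+1)]
    have hco : ∀ M ∈ Finset.range (n+1), (-1:ℤ)^M * ((n+1+1-M:ℕ):ℤ) * H M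
        = (-1)^M * ((n+1-M:ℕ):ℤ) * H M + (-1)^M * H M := by
      intro M hM
      rw [Finset.mem_range] at hM
      have h1 : (n+1+1-M:ℕ) = (n+1-M:ℕ)+1 := by omega
      rw [h1]
      push_cast
      ring
    rw [Finset.sum_congr rfl hco, Finset.sum_add_distrib]
    have h2 : (n+1+1-(n+1):ℕ) = 1 := by omega
    rw [h2]
    push_cast
    ring

lemma sign_invariant (H : ℕ → ℤ) (h0 : H 0 = 1) (hg : ∀ k, 2 * H k + 1 ≤ H (k+1)) :
    ∀ n, 1 ≤ (-1:ℤ)^n * (∑ m ∈ Finset.range (n+1), ∑ M ∈ Finset.range (m+1), (-1)^M * H M)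
      ∧ (-1:ℤ)^n * (∑ m ∈ Finset.range (n+1), ∑ M ∈ Finset.range (m+1), (-1)^M * H M)
          ≤ (-1)^n * (∑ M ∈ Finset.range (n+1), (-1)^M * H M)
      ∧ (-1:ℤ)^n * (∑ M ∈ Finset.range (n+1), (-1)^M * H M) ≤ H n := by
  intro n
  induction n with
  | zero => simp [h0]
  | succ n ih =>
    obtain ⟨ih1, ih2, ih3⟩ := ih
    have hU : ∑ M ∈ Finset.range (n+2), (-1:ℤ)^M * H M
        = (∑ M ∈ Finset.range (n+1), (-1:ℤ)^M * H M) + (-1)^(n+1) * H (n+1) :=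
      Finset.sum_range_succ _ _
    have hT : ∑ m ∈ Finset.range (n+2), ∑ M ∈ Finset.range (m+1), (-1:ℤ)^M * H M
        = (∑ m ∈ Finset.range (n+1), ∑ M ∈ Finset.range (m+1), (-1:ℤ)^M * H M)
          + ∑ M ∈ Finset.range (n+2), (-1:ℤ)^M * H M :=
      Finset.sum_range_succ _ _
    have hgn := hg n
    have hneg : (-1:ℤ)^(n+1) = -((-1:ℤ)^n) := by rw [pow_succ]; ring
    have hsq : (-1:ℤ)^n * (-1)^n = 1 := by
      rw [← pow_add]; exact Even.neg_one_pow ⟨n, rfl⟩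
    set U : ℤ := ∑ M ∈ Finset.range (n+1), (-1:ℤ)^M * H M with hUdef
    set T : ℤ := ∑ m ∈ Finset.range (n+1), ∑ M ∈ Finset.range (m+1), (-1:ℤ)^M * H M
    have e1 : (-1:ℤ)^(n+1) * (∑ M ∈ Finset.range (n+1+1), (-1:ℤ)^M * H M)
        = H (n+1) - (-1:ℤ)^n * U := by
      rw [hU, hneg]
      have : (-1:ℤ)^n * (-1)^(n+1) = -1 := by rw [hneg]; nlinarith [hsq]
      nlinarith [hsq]
    have e2 : (-1:ℤ)^(n+1) * (∑ m ∈ Finset.range (n+1+1), ∑ M ∈ Finset.range (m+1), (-1:ℤ)^M * H M)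
        = (H (n+1) - (-1:ℤ)^n * U) - (-1:ℤ)^n * T := by
      rw [hT, hU, hneg]
      nlinarith [hsq]
    refine ⟨?_, ?_, ?_⟩
    · rw [e2]; linarith
    · rw [e1, e2]; linarith
    · rw [e1]; linarith


/-- For `n ≥ 1`, `r ≥ 2` and integers `2 ≤ d₁ ≤ … ≤ d_r` with `3 ≤ d_r`:
if `n` is even then `χ(d₁,…,d_r; n) > 0`; if `n` is odd then `χ(d₁,…,d_r; n) < 0`. -/
theorem chi_ci_sign (n r : ℕ) (hn : 1 ≤ n) (hr : 2 ≤ r) (d : Fin r → ℤ)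
    (hmono : Monotone d) (h1 : 2 ≤ d ⟨0, by omega⟩) (h2 : 3 ≤ d ⟨r - 1, by omega⟩) :
    (Even n → 0 < chi d n) ∧ (Odd n → chi d n < 0) := by
  have hd2 : ∀ j, 2 ≤ d j := by
    intro j
    exact le_trans h1 (hmono (by exact Fin.mk_le_of_le_val (Nat.zero_le _)))
  set e : Fin r → ℤ := fun j => d j - 1 with he
  have he1 : ∀ j, 1 ≤ e j := fun j => by
    have := hd2 j
    simp only [he]
    omega
  have he2 : 2 ≤ e ⟨r-1, by omega⟩ := by
    simp only [he]
    omega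
  have hgrow := growth r hr e he1 he2
  have hH0 : hcomplete 0 e = 1 := hc_zero e
  have hinv := sign_invariant (fun M => hcomplete M e) hH0 hgrow n
  have hmain := MAIN n r (by omega) d
  have hte := T_eq (fun M => hcomplete M e) n
  rw [← he] at hmain
  rw [← hte] at hmain
  set T : ℤ := ∑ m ∈ Finset.range (n+1), ∑ M ∈ Finset.range (m+1),
      (-1:ℤ)^M * hcomplete M e with hTdef
  obtain ⟨hinv1, hinv2, hinv3⟩ := hinv
  have hprod : 0 < ∏ j, d j :=
    Finset.prod_pos (fun j _ => lt_of_lt_of_le (by norm_num) (hd2 j))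
  have hchi : chi d n = (∏ j, d j) * T := by
    rw [chi, hmain]
  constructor
  · intro hev
    have hpow : (-1:ℤ)^n = 1 := Even.neg_one_pow hev
    rw [hpow, one_mul] at hinv1
    rw [hchi]
    exact mul_pos hprod (by linarith)
  · intro hodd
    have hpow : (-1:ℤ)^n = -1 := Odd.neg_one_pow hodd
    rw [hpow] at hinv1
    rw [hchi]
    exact mul_neg_of_pos_of_neg hprod (by linarith)
end

section
/- Let n ≥ 2 be an even integer and d ≥ 3 an integer with (n, d) ≠ (2, 3). Then χ(d; n) > (n + 1)·d. Moreover, in the excluded case one has equality: χ(3; 2) = 9 = (2 + 1)·3. -/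
lemma hcomplete_singleton (k : ℕ) (d : ℤ) : hcomplete k ![d] = d ^ k := by
  simp [hcomplete, Finset.Nat.antidiagonalTuple_one]

lemma chi_singleton (d : ℤ) (n : ℕ) :
    chi ![d] n = d * ∑ i ∈ Finset.range (n + 1),
      (-1) ^ (n - i) * ((n + 2).choose i : ℤ) * d ^ (n - i) := by
  simp [chi, hcomplete_singleton]

theorem mul_chi_singleton (d : ℤ) (n : ℕ) :
    d * chi ![d] n = (1 - d) ^ (n + 2) + (n + 2) * d - 1 := by
  have hexpand := add_pow (1 : ℤ) (-d) (n + 2)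
  rw [Finset.sum_range_succ, Finset.sum_range_succ] at hexpand
  have hhead : ∀ i ∈ Finset.range (n + 1),
      1 ^ i * (-d) ^ (n + 2 - i) * ((n + 2).choose i : ℤ)
        = d * ((-1) ^ (n - i) * ((n + 2).choose i : ℤ) * d ^ (n - i)) * d := by
    intro i hi
    rw [show n + 2 - i = n - i + 2 by grind, neg_pow, pow_add, pow_add]
    ring
  rw [Finset.sum_congr rfl hhead, ← Finset.sum_mul, ← Finset.mul_sum, ← chi_singleton,
    Nat.choose_succ_self_right, Nat.choose_self] at hexpand
  simp only [show n + 2 - (n + 1) = 1 by omega, Nat.sub_self] at hexpand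
  push_cast at hexpand
  linear_combination -hexpand

theorem mul_add_one_sub_one_lt_pow_succ {e : ℤ} {m : ℕ} (he : 2 ≤ e) (hm : 2 ≤ m)
    (h : m * (e + 1) - 1 ≤ e ^ m) : (m + 1 : ℕ) * (e + 1) - 1 < e ^ (m + 1) := by
  have hm' : (2 : ℤ) ≤ m := by exact_mod_cast hm
  rw [pow_succ]
  push_cast
  nlinarith [mul_le_mul_of_nonneg_right h (by linarith : (0 : ℤ) ≤ e),
    mul_nonneg (sub_nonneg.2 hm') (by nlinarith : (0 : ℤ) ≤ e ^ 2 - 1)]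

theorem mul_add_one_sub_one_le_pow {e : ℤ} {m : ℕ} (he : 2 ≤ e) (hm : 3 ≤ m) :
    m * (e + 1) - 1 ≤ e ^ m := by
  induction m, hm using Nat.le_induction with
  | base => push_cast; nlinarith [sq_nonneg (e + 1)]
  | succ m hm ih => exact (mul_add_one_sub_one_lt_pow_succ he (by omega) ih).le

theorem mul_add_one_sub_one_lt_pow {e : ℤ} {m : ℕ} (he : 2 ≤ e) (hm : 3 ≤ m)
    (hme : (m, e) ≠ (3, 2)) : m * (e + 1) - 1 < e ^ m := by
  obtain rfl | hm4 := hm.eq_or_lt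
  · have he3 : 3 ≤ e := lt_of_le_of_ne he fun h => hme (by rw [← h])
    push_cast
    nlinarith [sq_nonneg (e + 1)]
  · obtain ⟨k, rfl⟩ := Nat.exists_eq_add_of_lt hm4
    exact mul_add_one_sub_one_lt_pow_succ he (by omega) (mul_add_one_sub_one_le_pow he (by omega))

/-- For even `n ≥ 2` and `d ≥ 3` with `(n, d) ≠ (2, 3)` one has `χ(d; n) > (n + 1)·d`;
moreover in the excluded case there is equality `χ(3; 2) = 9 = (2 + 1)·3`. -/
theorem chi_hypersurface_lower_bound :
    (∀ (n : ℕ) (d : ℤ), 2 ≤ n → Even n → 3 ≤ d → ((n : ℕ), d) ≠ (2, 3) →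
      ((n : ℤ) + 1) * d < chi ![d] n) ∧
    chi ![(3 : ℤ)] 2 = 9 ∧ (9 : ℤ) = (2 + 1) * 3 := by
  refine ⟨fun n d hn hne hd hnd => ?_, ?_, by norm_num⟩
  · have hpow : (n + 1 : ℕ) * (d - 1 + 1) - 1 < (d - 1) ^ (n + 1) :=
      mul_add_one_sub_one_lt_pow (by linarith) (by omega) fun h => hnd (by grind)
    have hsign : (1 - d) ^ (n + 2) = (d - 1) ^ (n + 2) := by
      rw [← (hne.add even_two).neg_pow, neg_sub]
    rw [← mul_lt_mul_iff_right₀ (by linarith : 0 < d), mul_chi_singleton, hsign, pow_succ]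
    push_cast at hpow
    nlinarith
  · have h := mul_chi_singleton 3 2
    norm_num at h
    linarith
end
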